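/- Let R = [[A, B],[0, C]] be a block upper-triangular real matrix with A a square invertible P×P block, B of size P×(M−P), and C of size (M−P)×(M−P') appropriately. After exchanging the i-th column of [A;0] with the (P+j)-th column of [B;C] and re-triangularizing via an orthogonal transformation to obtain R̄ = [[Ā, B̄],[0, C̄]] with Ā having positive diagonal, the determinant ratio satisfies det(Ā)/det(A) = sqrt( ((A⁻¹B)_{i,j})² + (‖C(:,j)‖₂ · ‖A⁻¹(i,:)‖₂)² ). -/

import Mathlib

/-- Euclidean norm of a finite real vector. -/
noncomputable def vecNorm {n : ℕ} (x : Fin n → ℝ) : ℝ := Real.sqrt (∑ l, (x l) ^ 2)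

/-!
Because `U` is orthogonal, `Āᵀ Ā` is the Gram matrix `Nᵀ N` of the first `P` columns `N` of the
column-swapped matrix. `N` stacks `M`, which is `A` with column `i` replaced by `B(:,j)`, on a
block whose only nonzero column is `C(:,j)`, in position `i`; hence
`Nᵀ N = Mᵀ M + ‖C(:,j)‖² eᵢ eᵢᵀ`, and this rank-one diagonal update adds
`‖C(:,j)‖² adj(Mᵀ M)ᵢᵢ = ‖C(:,j)‖² ‖adj(M)(i,:)‖²` to `det (Mᵀ M) = det M ²`. Row `i` of an
adjugate does not see column `i`, so `adj(M)(i,:) = adj(A)(i,:) = det A · A⁻¹(i,:)`, and Cramer's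
rule gives `det M = det A · (A⁻¹ B)ᵢⱼ`. Thus
`det Ā ² = det A ² ((A⁻¹ B)ᵢⱼ² + ‖C(:,j)‖² ‖A⁻¹(i,:)‖²)`, and both determinants are positive.
-/

namespace Matrix

section CommRing

variable {R : Type*} [CommRing R] {n : Type*} [Fintype n] [DecidableEq n]

theorem adjugate_updateCol_apply_self (A : Matrix n n R) (i k : n) (b : n → R) :
    (A.updateCol i b).adjugate i k = A.adjugate i k := by
  rw [← transpose_apply (adjugate _), ← transpose_apply A.adjugate, adjugate_transpose,
    adjugate_transpose, adjugate_apply, adjugate_apply, ← updateRow_transpose, updateRow_idem]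

theorem adjugate_apply_eq_det_mul_inv_apply (A : Matrix n n R) (h : IsUnit A.det) (i k : n) :
    A.adjugate i k = A.det * A⁻¹ i k := by
  rw [inv_def, smul_apply, smul_eq_mul, ← mul_assoc, Ring.mul_inverse_cancel _ h, one_mul]

theorem det_updateCol_eq_det_mul_inv_mulVec (A : Matrix n n R) (h : IsUnit A.det) (i : n)
    (b : n → R) : (A.updateCol i b).det = A.det * (A⁻¹ *ᵥ b) i := by
  rw [← cramer_apply, ← det_smul_inv_mulVec_eq_cramer _ _ h, Pi.smul_apply, smul_eq_mul]

theorem det_add_single_self (G : Matrix n n R) (i : n) (c : R) :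
    (G + single i i c).det = G.det + c * G.adjugate i i := by
  have h : G + single i i c = G.updateRow i (G i + c • Pi.single i 1) := by
    ext a b
    by_cases ha : i = a <;> by_cases hb : i = b <;> simp_all [updateRow_apply, eq_comm]
  rw [h, det_updateRow_add, updateRow_eq_self, det_updateRow_smul, adjugate_apply]

theorem adjugate_transpose_mul_self_apply_self (M : Matrix n n R) (i : n) :
    (Mᵀ * M).adjugate i i = ∑ k, M.adjugate i k ^ 2 := by
  rw [adjugate_mul_distrib, ← adjugate_transpose, mul_apply]
  simp only [transpose_apply, sq]

end CommRing

theorem IsUpperTriangular.det_pos {R n : Type*} [CommRing R] [LinearOrder R]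
    [IsStrictOrderedRing R] [Fintype n] [DecidableEq n] [LinearOrder n] {A : Matrix n n R}
    (hA : A.IsUpperTriangular) (hdiag : ∀ i, 0 < A i i) : 0 < A.det := by
  rw [det_of_isUpperTriangular hA]
  exact Finset.prod_pos fun i _ => hdiag i

section Blocks

variable {R : Type*} {m₁ m₂ n₁ n₂ l : Type*}

theorem toCols₁_fromBlocks [Zero R] (A : Matrix m₁ n₁ R) (B : Matrix m₁ n₂ R)
    (C : Matrix m₂ n₁ R) (D : Matrix m₂ n₂ R) : (fromBlocks A B C D).toCols₁ = fromRows A C := by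
  ext (r | r) a <;> rfl

theorem transpose_mul_self_eq_of_fromBlocks_eq_mul [CommRing R] [Fintype m₁] [Fintype m₂]
    [Fintype l] [DecidableEq l] {A : Matrix m₁ n₁ R} {B : Matrix m₁ n₂ R} {C : Matrix m₂ n₂ R}
    {U : Matrix (m₁ ⊕ m₂) l R} {Y : Matrix l (n₁ ⊕ n₂) R} (hU : Uᵀ * U = 1)
    (h : fromBlocks A B 0 C = U * Y) : Aᵀ * A = Y.toCols₁ᵀ * Y.toCols₁ := by
  -- Without the ascriptions `*` would elaborate through `CStarMatrix`'s default `HMul` instance.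
  have hA : (fromRows A 0 : Matrix (m₁ ⊕ m₂) n₁ R)ᵀ * (fromRows A 0 : Matrix (m₁ ⊕ m₂) n₁ R) =
      Aᵀ * A := by
    rw [transpose_fromRows, fromCols_mul_fromRows, Matrix.mul_zero, add_zero]
  have hY : (fromRows A 0 : Matrix (m₁ ⊕ m₂) n₁ R) = U * Y.toCols₁ := by
    rw [← toCols₁_fromBlocks A B 0 C, h]
    rfl
  rw [← hA, hY, transpose_mul, Matrix.mul_assoc, ← Matrix.mul_assoc Uᵀ, hU, Matrix.one_mul]

variable [DecidableEq n₁]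

theorem toCols₁_fromBlocks_submatrix_swap [Zero R] [DecidableEq n₂] (A : Matrix m₁ n₁ R)
    (B : Matrix m₁ n₂ R) (C : Matrix m₂ n₂ R) (i : n₁) (j : n₂) :
    ((fromBlocks A B 0 C).submatrix id (Equiv.swap (Sum.inl i) (Sum.inr j))).toCols₁ =
      fromRows (A.updateCol i fun r => B r j)
        ((0 : Matrix m₂ n₁ R).updateCol i fun r => C r j) := by
  ext (r | r) a <;> by_cases ha : a = i <;> simp [ha, Equiv.swap_apply_def]

theorem transpose_mul_self_updateCol_zero [CommRing R] [Fintype m₂] (i : n₁) (c : m₂ → R) :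
    ((0 : Matrix m₂ n₁ R).updateCol i c)ᵀ * (0 : Matrix m₂ n₁ R).updateCol i c =
      single i i (c ⬝ᵥ c) := by
  ext a b
  by_cases ha : i = a <;> by_cases hb : i = b <;> simp_all [mul_apply, dotProduct, eq_comm]

end Blocks

theorem det_sq_of_fromBlocks_eq_mul_swap {K : Type*} [Field K] {n₁ n₂ m₂ : Type*}
    [Fintype n₁] [DecidableEq n₁] [Fintype n₂] [DecidableEq n₂] [Fintype m₂] [DecidableEq m₂]
    {A A' : Matrix n₁ n₁ K} {B B' : Matrix n₁ n₂ K} {C C' : Matrix m₂ n₂ K}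
    {U : Matrix (n₁ ⊕ m₂) (n₁ ⊕ m₂) K} (hA : IsUnit A.det) (i : n₁) (j : n₂) (hU : Uᵀ * U = 1)
    (h : fromBlocks A' B' 0 C' =
      U * (fromBlocks A B 0 C).submatrix id (Equiv.swap (Sum.inl i) (Sum.inr j))) :
    A'.det ^ 2 = A.det ^ 2 * ((A⁻¹ * B) i j ^ 2 +
      ((fun r => C r j) ⬝ᵥ (fun r => C r j)) * ((fun k => A⁻¹ i k) ⬝ᵥ (fun k => A⁻¹ i k))) := by
  set M := A.updateCol i fun r => B r j
  have hgram : A'ᵀ * A' = Mᵀ * M + single i i ((fun r => C r j) ⬝ᵥ (fun r => C r j)) := by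
    rw [transpose_mul_self_eq_of_fromBlocks_eq_mul hU h, toCols₁_fromBlocks_submatrix_swap,
      transpose_fromRows, fromCols_mul_fromRows, transpose_mul_self_updateCol_zero]
  have hdetM : M.det = A.det * (A⁻¹ * B) i j := det_updateCol_eq_det_mul_inv_mulVec A hA i _
  have hadjM (k : n₁) : M.adjugate i k = A.det * A⁻¹ i k := by
    rw [adjugate_updateCol_apply_self, adjugate_apply_eq_det_mul_inv_apply A hA]
  calc A'.det ^ 2 = (A'ᵀ * A').det := by rw [det_mul, det_transpose, sq]
    _ = _ := by
      rw [hgram, det_add_single_self, det_mul, det_transpose,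
        adjugate_transpose_mul_self_apply_self, hdetM]
      simp only [hadjM, mul_pow, ← Finset.mul_sum, dotProduct, ← sq]
      ring

end Matrix

theorem vecNorm_sq {n : ℕ} (x : Fin n → ℝ) : vecNorm x ^ 2 = x ⬝ᵥ x := by
  rw [vecNorm, Real.sq_sqrt (Finset.sum_nonneg fun _ _ => sq_nonneg _)]
  simp only [dotProduct, sq]

theorem stmt9 {P m : ℕ}
    (A : Matrix (Fin P) (Fin P) ℝ) (B : Matrix (Fin P) (Fin m) ℝ)
    (C : Matrix (Fin m) (Fin m) ℝ)
    (hAtri : A.BlockTriangular (id : Fin P → Fin P))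
    (hAdiag : ∀ i, 0 < A i i)
    (i : Fin P) (j : Fin m)
    (Abar : Matrix (Fin P) (Fin P) ℝ) (Bbar : Matrix (Fin P) (Fin m) ℝ)
    (Cbar : Matrix (Fin m) (Fin m) ℝ)
    (hAbarTri : Abar.BlockTriangular (id : Fin P → Fin P))
    (hAbardiag : ∀ i, 0 < Abar i i)
    (U : Matrix (Fin P ⊕ Fin m) (Fin P ⊕ Fin m) ℝ)
    (hU : U.transpose * U = 1)
    (hretriEq : Matrix.fromBlocks Abar Bbar 0 Cbar =
      U * (Matrix.fromBlocks A B 0 C).submatrix id (Equiv.swap (Sum.inl i) (Sum.inr j))) :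
    Abar.det / A.det =
      Real.sqrt (((A⁻¹ * B) i j) ^ 2 +
        (vecNorm (fun l => C l j) * vecNorm (fun l => A⁻¹ i l)) ^ 2) := by
  have hA := Matrix.IsUpperTriangular.det_pos hAtri hAdiag
  have hAbar := Matrix.IsUpperTriangular.det_pos hAbarTri hAbardiag
  have hsq := Matrix.det_sq_of_fromBlocks_eq_mul_swap (isUnit_iff_ne_zero.2 hA.ne') i j hU hretriEq
  rw [div_eq_iff hA.ne', mul_pow, vecNorm_sq, vecNorm_sq, ← Real.sqrt_sq hAbar.le, hsq,
    Real.sqrt_mul (sq_nonneg _), Real.sqrt_sq hA.le, mul_comm]
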